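/- The point P = (−s, 0) on the elliptic curve y² + s²xy = x³ + 2sx² + s²x over ℚ(s) is a torsion point of exact order 4, and the subgroup it generates consists of (−s,0), (0,0), (−s,s³), and the point at infinity. -/

import Mathlib

open WeierstrassCurve

/-- The elliptic curve `y² + s²xy = x³ + 2sx² + s²x` over `ℚ(s)`. -/
noncomputable def W3 : WeierstrassCurve (RatFunc ℚ) :=
  { a₁ := RatFunc.X ^ 2, a₂ := 2 * RatFunc.X, a₃ := 0, a₄ := RatFunc.X ^ 2, a₆ := 0 }

private lemma some_eq_some' {R : Type*} [CommRing R] {W : Affine R} {x₁ y₁ x₂ y₂ : R}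
    (hx : x₁ = x₂) (hy : y₁ = y₂) (h : W.Nonsingular x₁ y₁) (h' : W.Nonsingular x₂ y₂) :
    Affine.Point.some _ _ h = Affine.Point.some _ _ h' := by
  subst hx; subst hy; rfl

private lemma sX_ne : (RatFunc.X : RatFunc ℚ) ≠ 0 := RatFunc.X_ne_zero

open Classical

section Pts

variable (h1 : W3.toAffine.Nonsingular (-RatFunc.X) 0)
variable (h2 : W3.toAffine.Nonsingular 0 0)
variable (h3 : W3.toAffine.Nonsingular (-RatFunc.X) (RatFunc.X ^ 3))

private lemma hyne : (0 : RatFunc ℚ) ≠ W3.toAffine.negY (-RatFunc.X) 0 := by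
  simp only [Affine.negY, W3]
  intro h
  apply pow_ne_zero 3 sX_ne
  linear_combination -h

private lemma slopeP : W3.toAffine.slope (-RatFunc.X) (-RatFunc.X) 0 0 = 0 := by
  rw [Affine.slope_of_Y_ne rfl hyne]
  simp only [W3, Affine.negY]
  rw [div_eq_zero_iff]
  left; ring

private lemma two_smul_P : Affine.Point.some _ _ h1 + Affine.Point.some _ _ h1 = Affine.Point.some _ _ h2 := by
  rw [Affine.Point.add_self_of_Y_ne hyne]
  apply some_eq_some' <;> rw [slopeP] <;>
    simp only [Affine.addX, Affine.addY, Affine.negAddY, Affine.negY, W3] <;> ring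

private lemma two_smul_Q : Affine.Point.some _ _ h2 + Affine.Point.some _ _ h2 = 0 := by
  apply Affine.Point.add_self_of_Y_eq
  simp [Affine.negY, W3]

private lemma Q_add_P : Affine.Point.some _ _ h2 + Affine.Point.some _ _ h1 = Affine.Point.some _ _ h3 := by
  have hx : (0 : RatFunc ℚ) ≠ -RatFunc.X := by
    intro h; exact sX_ne (by linear_combination h)
  rw [Affine.Point.add_of_X_ne hx]
  have hs : W3.toAffine.slope 0 (-RatFunc.X) 0 0 = 0 := by
    rw [Affine.slope_of_X_ne hx]; simp
  apply some_eq_some' <;> rw [hs] <;>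
    simp only [Affine.addX, Affine.addY, Affine.negAddY, Affine.negY, W3] <;> ring

end Pts

/-- The point `P = (−s, 0)` is torsion of exact order 4, and the subgroup it generates
consists of `(−s,0)`, `(0,0)`, `(−s,s³)` and the point at infinity. -/
theorem stmt3
    (h1 : W3.toAffine.Nonsingular (-RatFunc.X) 0)
    (h2 : W3.toAffine.Nonsingular 0 0)
    (h3 : W3.toAffine.Nonsingular (-RatFunc.X) (RatFunc.X ^ 3)) :
    addOrderOf (Affine.Point.some _ _ h1) = 4 ∧
    (AddSubgroup.zmultiples (Affine.Point.some _ _ h1) : Set W3.toAffine.Point) =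
      {Affine.Point.some _ _ h1, Affine.Point.some _ _ h2, Affine.Point.some _ _ h3, 0} := by
  set P := Affine.Point.some _ _ h1 with hP
  have h2P : (2 : ℤ) • P = Affine.Point.some _ _ h2 := by
    rw [two_zsmul]; exact two_smul_P h1 h2
  have h3P : (3 : ℤ) • P = Affine.Point.some _ _ h3 := by
    rw [show (3 : ℤ) = 2 + 1 by norm_num, add_zsmul, one_zsmul, h2P]
    exact Q_add_P h1 h2 h3
  have h4P : (4 : ℤ) • P = 0 := by
    rw [show (4 : ℤ) = 2 + 2 by norm_num, add_zsmul, h2P]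
    exact two_smul_Q h2
  have hord : addOrderOf P = 4 := by
    haveI : Fact (Nat.Prime 2) := ⟨Nat.prime_two⟩
    have hnot : ¬ (2 : ℕ) ^ 1 • P = 0 := by
      rw [pow_one, two_nsmul, two_smul_P h1 h2]
      exact Affine.Point.some_ne_zero h2
    have hfin : (2 : ℕ) ^ (1 + 1) • P = 0 := by
      have h4 : (2 : ℕ) ^ (1 + 1) = 2 + 2 := by norm_num
      rw [h4, add_nsmul, two_nsmul, two_smul_P h1 h2]
      exact two_smul_Q h2
    have := addOrderOf_eq_prime_pow hnot hfin
    norm_num at this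
    exact this
  refine ⟨hord, ?_⟩
  ext x
  simp only [SetLike.mem_coe, AddSubgroup.mem_zmultiples_iff, Set.mem_insert_iff,
    Set.mem_singleton_iff]
  constructor
  · rintro ⟨k, rfl⟩
    have hmod : k • P = (k % 4) • P := by
      calc k • P = (4 * (k / 4) + k % 4) • P := by rw [Int.mul_ediv_add_emod]
        _ = (k / 4) • ((4 : ℤ) • P) + (k % 4) • P := by
            rw [add_zsmul, mul_comm, mul_zsmul]
        _ = (k % 4) • P := by rw [h4P, zsmul_zero, zero_add]
    have h04 : k % 4 = 0 ∨ k % 4 = 1 ∨ k % 4 = 2 ∨ k % 4 = 3 := by omega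
    rw [hmod]
    rcases h04 with h | h | h | h <;> rw [h]
    · exact Or.inr <| Or.inr <| Or.inr <| zero_zsmul P
    · exact Or.inl <| one_zsmul P
    · exact Or.inr <| Or.inl h2P
    · exact Or.inr <| Or.inr <| Or.inl h3P
  · rintro (rfl | rfl | rfl | rfl)
    · exact ⟨1, one_zsmul P⟩
    · exact ⟨2, h2P⟩
    · exact ⟨3, h3P⟩
    · exact ⟨0, zero_zsmul P⟩
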